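/- Let Q(j) := lim_{n→∞} P(n,j), let R(k) := lim_{j→∞} 2^j·P(k,j) for k ≥ 2, and let ρ := Σ_{k≥2} (e^{−1}/k!)·R(k). Then 2^j·Q(j) converges as j → ∞ to 2ρ/(1 − 2e^{−1}); that is, Q(j) ~ (2ρ/(1−2e^{−1}))·2^{−j} as j → ∞ (numerically ρ = 0.2950911517… and 2ρ/(1−2e^{−1}) = 2.233499118…). -/

import Mathlib

/-!
Each round at least halves the expectation of `2 ^ (number of active processors)`, whence
`|P n j| ≤ 2 ^ n / 2 ^ j`. This domination lets the Poisson limit `binomProb n k → e⁻¹ / k!` pass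
through the sums of the recurrence (dominated convergence):
`Q (j + 1) = e⁻¹ Q j + poissonAvg P j` and `2 ^ j poissonAvg P j → ρ`. So `x j = 2 ^ j Q j` obeys
`x (j + 1) = 2e⁻¹ x j + 2 ^ (j + 1) poissonAvg P j`, an affine recurrence with contraction factor
`2e⁻¹ < 1` and forcing tending to `2ρ`, hence `x j → 2ρ / (1 - 2e⁻¹)`.
-/

open Filter Topology Finset

noncomputable def binomProb (n k : ℕ) : ℝ :=
  n.choose k * (1 / (n : ℝ)) ^ k * (1 - 1 / (n : ℝ)) ^ (n - k)

lemma one_sub_one_div_nonneg (n : ℕ) : 0 ≤ 1 - 1 / (n : ℝ) := by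
  simpa [one_div] using Nat.cast_inv_le_one (α := ℝ) n

lemma one_sub_one_div_le_one (n : ℕ) : 1 - 1 / (n : ℝ) ≤ 1 := by
  simp only [sub_le_self_iff]; positivity

lemma binomProb_nonneg (n k : ℕ) : 0 ≤ binomProb n k := by
  have := one_sub_one_div_nonneg n
  unfold binomProb; positivity

lemma binomProb_le_inv_factorial (n k : ℕ) : binomProb n k ≤ 1 / k.factorial := by
  have hpow : (n.choose k : ℝ) * (1 / (n : ℝ)) ^ k ≤ 1 / k.factorial :=
    calc (n.choose k : ℝ) * (1 / (n : ℝ)) ^ k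
        ≤ (n : ℝ) ^ k / k.factorial * (1 / (n : ℝ)) ^ k := by
          gcongr; exact Nat.choose_le_pow_div k n
      _ = (n * (1 / (n : ℝ))) ^ k / k.factorial := by ring
      _ ≤ 1 / k.factorial := by
          gcongr
          refine pow_le_one₀ (by positivity) ?_
          rw [← div_eq_mul_one_div]
          exact div_self_le_one (n : ℝ)
  calc binomProb n k ≤ 1 / k.factorial * 1 := by
        unfold binomProb
        have := one_sub_one_div_nonneg n
        gcongr
        exact pow_le_one₀ (one_sub_one_div_nonneg n) (one_sub_one_div_le_one n)
    _ = 1 / k.factorial := mul_one _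

lemma tendsto_binomProb (k : ℕ) :
    Tendsto (fun n => binomProb n k) atTop (𝓝 (Real.exp (-1) / k.factorial)) := by
  have hmean : Tendsto (fun n : ℕ => (n : ℝ) * (1 / n)) atTop (𝓝 1) :=
    tendsto_const_nhds.congr' <| by
      filter_upwards [eventually_ge_atTop 1] with n hn
      field_simp
  simpa [binomProb] using ProbabilityTheory.tendsto_choose_mul_pow_of_tendsto_mul_atTop k hmean

lemma sum_range_binomProb_mul_pow (n : ℕ) (x : ℝ) :
    ∑ k ∈ range (n + 1), binomProb n k * x ^ k = (x / n + (1 - 1 / n)) ^ n := by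
  rw [add_pow]
  refine sum_congr rfl fun k _ => ?_
  unfold binomProb; ring

lemma sum_Icc_binomProb_mul_eq_tsum (m n : ℕ) (g : ℕ → ℝ) :
    ∑ k ∈ Icc m n, binomProb n k * g k = ∑' k, binomProb n (k + m) * g (k + m) := by
  rw [tsum_eq_sum (s := range (n + 1 - m)), ← Ico_add_one_right_eq_Icc, sum_Ico_eq_sum_range]
  · simp only [add_comm m]
  · intro k hk
    rw [mem_range, not_lt] at hk
    simp [binomProb, Nat.choose_eq_zero_of_lt (by omega : n < k + m)]

lemma one_sub_one_div_pow_mul_two_pow_add_sum_binomProb_le {n : ℕ} (hn : 2 ≤ n) :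
    (1 - 1 / (n : ℝ)) ^ n * 2 ^ n + ∑ k ∈ Icc 2 n, binomProb n k * 2 ^ k ≤ 2 ^ n / 2 := by
  rcases lt_or_ge n 5 with hsmall | hlarge
  · interval_cases n <;> norm_num [binomProb, sum_Icc_succ_top, Nat.choose]
  have hstay : (1 - 1 / (n : ℝ)) ^ n ≤ Real.exp (-1) :=
    Real.one_sub_div_pow_le_exp_neg (by norm_cast; omega)
  have hmove : ∑ k ∈ Icc 2 n, binomProb n k * 2 ^ k ≤ Real.exp 1 :=
    calc ∑ k ∈ Icc 2 n, binomProb n k * 2 ^ k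
        ≤ ∑ k ∈ range (n + 1), binomProb n k * 2 ^ k :=
          sum_le_sum_of_subset_of_nonneg (fun k hk => by simp at hk ⊢; omega)
            fun k _ _ => mul_nonneg (binomProb_nonneg n k) (by positivity)
      _ = (1 + (n : ℝ)⁻¹) ^ n := by rw [sum_range_binomProb_mul_pow]; ring
      _ ≤ Real.exp 1 := Real.one_add_inv_pow_le_exp
  have h32 : (32 : ℝ) ≤ 2 ^ n := by
    calc (32 : ℝ) = 2 ^ 5 := by norm_num
      _ ≤ 2 ^ n := pow_le_pow_right₀ (by norm_num) hlarge
  have he : Real.exp 1 < 2.7182818286 := Real.exp_one_lt_d9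
  have he' : Real.exp (-1) < 0.3679 := by
    rw [Real.exp_neg, inv_lt_comm₀ (Real.exp_pos 1) (by norm_num)]
    linarith [Real.exp_one_gt_d9]
  nlinarith [mul_le_mul_of_nonneg_right hstay (by positivity : (0 : ℝ) ≤ 2 ^ n)]

lemma abs_le_two_pow_div_two_pow {P : ℕ → ℕ → ℝ}
    (hP1 : ∀ n : ℕ, 2 ≤ n → P n 1 = (1 - 1 / (n : ℝ)) ^ (n - 1))
    (hP : ∀ n : ℕ, 2 ≤ n → ∀ j : ℕ, 2 ≤ j →
      P n j = (1 - 1 / (n : ℝ)) ^ n * P n (j - 1) +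
        ∑ k ∈ Icc 2 n, binomProb n k * P k (j - 1))
    {j : ℕ} (hj : 1 ≤ j) {n : ℕ} (hn : 2 ≤ n) : |P n j| ≤ 2 ^ n / 2 ^ j := by
  induction j, hj using Nat.le_induction generalizing n with
  | base =>
    rw [hP1 n hn, abs_of_nonneg (pow_nonneg (one_sub_one_div_nonneg n) _)]
    calc (1 - 1 / (n : ℝ)) ^ (n - 1) ≤ 1 :=
          pow_le_one₀ (one_sub_one_div_nonneg n) (one_sub_one_div_le_one n)
      _ ≤ 2 ^ n / 2 ^ 1 := by
        rw [le_div_iff₀ (by norm_num), one_mul]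
        exact pow_le_pow_right₀ (by norm_num) (by omega)
  | succ j hj ih =>
    have hstay := pow_nonneg (one_sub_one_div_nonneg n) n
    rw [hP n hn (j + 1) (by omega), Nat.add_sub_cancel]
    calc |(1 - 1 / (n : ℝ)) ^ n * P n j + ∑ k ∈ Icc 2 n, binomProb n k * P k j|
        ≤ (1 - 1 / (n : ℝ)) ^ n * |P n j| + ∑ k ∈ Icc 2 n, binomProb n k * |P k j| := by
          refine (abs_add_le _ _).trans (add_le_add ?_ ((abs_sum_le_sum_abs _ _).trans ?_))
          · rw [abs_mul, abs_of_nonneg hstay]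
          · simp only [abs_mul, abs_of_nonneg (binomProb_nonneg _ _), le_refl]
      _ ≤ (1 - 1 / (n : ℝ)) ^ n * (2 ^ n / 2 ^ j)
            + ∑ k ∈ Icc 2 n, binomProb n k * (2 ^ k / 2 ^ j) := by
          gcongr with k hk
          · exact ih hn
          · exact binomProb_nonneg n k
          · exact ih (mem_Icc.1 hk).1
      _ = ((1 - 1 / (n : ℝ)) ^ n * 2 ^ n + ∑ k ∈ Icc 2 n, binomProb n k * 2 ^ k) / 2 ^ j := by
          rw [add_div, sum_div]; simp only [mul_div_assoc]
      _ ≤ 2 ^ n / 2 / 2 ^ j := by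
          gcongr; exact one_sub_one_div_pow_mul_two_pow_add_sum_binomProb_le hn
      _ = 2 ^ n / 2 ^ (j + 1) := by rw [pow_succ]; ring

lemma tendsto_sum_Icc_binomProb_mul (m : ℕ) {g : ℕ → ℝ} {C r : ℝ}
    (hg : ∀ k, m ≤ k → |g k| ≤ C * r ^ k) :
    Tendsto (fun n => ∑ k ∈ Icc m n, binomProb n k * g k) atTop
      (𝓝 (∑' k, Real.exp (-1) / (k + m).factorial * g (k + m))) := by
  simp only [sum_Icc_binomProb_mul_eq_tsum]
  have hsum : Summable fun k => C * (r ^ (k + m) / (k + m).factorial) :=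
    ((summable_nat_add_iff m).2 (Real.summable_pow_div_factorial r)).mul_left C
  refine tendsto_tsum_of_dominated_convergence hsum
    (fun k => (tendsto_binomProb (k + m)).mul_const _) (Eventually.of_forall fun n k => ?_)
  rw [norm_mul, Real.norm_of_nonneg (binomProb_nonneg _ _), Real.norm_eq_abs]
  calc binomProb n (k + m) * |g (k + m)| ≤ 1 / (k + m).factorial * (C * r ^ (k + m)) :=
        mul_le_mul (binomProb_le_inv_factorial _ _) (hg _ (by omega)) (abs_nonneg _)
          (by positivity)
    _ = C * (r ^ (k + m) / (k + m).factorial) := by ring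

noncomputable def poissonAvg (P : ℕ → ℕ → ℝ) (j : ℕ) : ℝ :=
  ∑' k, Real.exp (-1) / (k + 2).factorial * P (k + 2) j

lemma eq_exp_neg_one_mul_add_poissonAvg_of_tendsto {P : ℕ → ℕ → ℝ}
    (hP : ∀ n : ℕ, 2 ≤ n → ∀ j : ℕ, 2 ≤ j →
      P n j = (1 - 1 / (n : ℝ)) ^ n * P n (j - 1) +
        ∑ k ∈ Icc 2 n, binomProb n k * P k (j - 1))
    {j : ℕ} (hj : 1 ≤ j) {C r : ℝ} (hbound : ∀ k, 2 ≤ k → |P k j| ≤ C * r ^ k) {q q' : ℝ}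
    (hq : Tendsto (fun n => P n j) atTop (𝓝 q))
    (hq' : Tendsto (fun n => P n (j + 1)) atTop (𝓝 q')) :
    q' = Real.exp (-1) * q + poissonAvg P j := by
  have hstay : Tendsto (fun n : ℕ => (1 - 1 / (n : ℝ)) ^ n) atTop (𝓝 (Real.exp (-1))) := by
    simpa [sub_eq_add_neg, neg_div] using Real.tendsto_one_add_div_pow_exp (-1)
  refine tendsto_nhds_unique hq' ((hstay.mul hq).add
    (tendsto_sum_Icc_binomProb_mul 2 hbound) |>.congr' ?_)
  filter_upwards [eventually_ge_atTop 2] with n hn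
  rw [hP n hn (j + 1) (by omega), Nat.add_sub_cancel]

lemma tendsto_two_pow_mul_poissonAvg {P : ℕ → ℕ → ℝ} {R : ℕ → ℝ}
    (hbound : ∀ j n, 1 ≤ j → 2 ≤ n → |P n j| ≤ 2 ^ n / 2 ^ j)
    (hR : ∀ k, 2 ≤ k → Tendsto (fun j => (2 : ℝ) ^ j * P k j) atTop (𝓝 (R k))) :
    Tendsto (fun j => 2 ^ j * poissonAvg P j) atTop
      (𝓝 (∑' k, Real.exp (-1) / (k + 2).factorial * R (k + 2))) := by
  have hsum : Summable fun k => Real.exp (-1) * (2 ^ (k + 2) / (k + 2).factorial) :=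
    ((summable_nat_add_iff 2).2 (Real.summable_pow_div_factorial 2)).mul_left _
  simp only [poissonAvg, ← tsum_mul_left, mul_left_comm ((2 : ℝ) ^ _)]
  refine tendsto_tsum_of_dominated_convergence hsum
    (fun k => (hR (k + 2) (by omega)).const_mul _) ?_
  filter_upwards [eventually_ge_atTop 1] with j hj k
  simp only [norm_mul, Real.norm_eq_abs, abs_div, abs_pow, abs_two, Nat.abs_cast,
    abs_of_pos (Real.exp_pos _)]
  calc Real.exp (-1) / (k + 2).factorial * (2 ^ j * |P (k + 2) j|)
      ≤ Real.exp (-1) / (k + 2).factorial * (2 ^ j * (2 ^ (k + 2) / 2 ^ j)) := by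
        gcongr; exact hbound j (k + 2) hj (by omega)
    _ = Real.exp (-1) * (2 ^ (k + 2) / (k + 2).factorial) := by field_simp

lemma tendsto_zero_of_eq_mul_add {a : ℝ} (ha : |a| < 1) {y v : ℕ → ℝ}
    (hy : ∀ j, y (j + 1) = a * y j + v j) (hv : Tendsto v atTop (𝓝 0)) :
    Tendsto y atTop (𝓝 0) := by
  rw [Metric.tendsto_atTop]
  intro ε hε
  obtain ⟨N, hN⟩ := Metric.tendsto_atTop.1 hv (ε * (1 - |a|) / 2) (by positivity)
  have hdecay : ∀ m, |y (N + m)| ≤ |a| ^ m * |y N| + ε / 2 := by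
    intro m
    induction m with
    | zero => simp; linarith
    | succ m ih =>
      have hvm : |v (N + m)| < ε * (1 - |a|) / 2 := by
        simpa using hN (N + m) (by omega)
      calc |y (N + (m + 1))| ≤ |a| * |y (N + m)| + |v (N + m)| := by
            rw [← add_assoc, hy, ← abs_mul]; exact abs_add_le _ _
        _ ≤ |a| * (|a| ^ m * |y N| + ε / 2) + ε * (1 - |a|) / 2 := by
            gcongr
        _ = |a| ^ (m + 1) * |y N| + ε / 2 := by ring
  have hsmall : ∀ᶠ m in atTop, |a| ^ m * |y N| < ε / 2 := by
    have := (tendsto_pow_atTop_nhds_zero_of_lt_one (abs_nonneg a) ha).mul_const |y N|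
    rw [zero_mul] at this
    exact this.eventually (gt_mem_nhds (half_pos hε))
  obtain ⟨M, hM⟩ := hsmall.exists_forall_of_atTop
  refine ⟨N + M, fun j hj => ?_⟩
  obtain ⟨m, rfl⟩ := Nat.exists_eq_add_of_le (le_of_add_le_left hj)
  rw [Real.dist_eq, sub_zero]
  linarith [hdecay m, hM m (by omega)]

lemma tendsto_div_one_sub_of_eq_mul_add {a L : ℝ} (ha : |a| < 1) {x u : ℕ → ℝ}
    (hx : ∀ j, x (j + 1) = a * x j + u j) (hu : Tendsto u atTop (𝓝 L)) :
    Tendsto x atTop (𝓝 (L / (1 - a))) := by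
  have ha1 : 1 - a ≠ 0 := by linarith [le_abs_self a]
  have hy := tendsto_zero_of_eq_mul_add ha (y := fun j => x j - L / (1 - a))
    (v := fun j => u j - L) (fun j => by rw [hx]; field_simp; ring)
    (by simpa using hu.sub_const L)
  simpa using hy.add_const (L / (1 - a))

lemma abs_two_mul_exp_neg_one_lt_one : |2 * Real.exp (-1)| < 1 := by
  rw [abs_of_pos (by positivity), Real.exp_neg, ← div_eq_mul_inv, div_lt_one (Real.exp_pos 1)]
  linarith [Real.add_one_lt_exp one_ne_zero]

/-- 2^j·Q(j) → 2ρ/(1 − 2e⁻¹) as j → ∞, where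
    ρ = Σ_{k≥2} (e⁻¹/k!)·R(k). -/
theorem Q_asymptotics
    (P : ℕ → ℕ → ℝ) (Q : ℕ → ℝ) (R : ℕ → ℝ) (ρ : ℝ)
    (hP1 : ∀ n : ℕ, 2 ≤ n → P n 1 = (1 - 1/(n:ℝ))^(n-1))
    (hP : ∀ n : ℕ, 2 ≤ n → ∀ j : ℕ, 2 ≤ j →
      P n j = (1 - 1/(n:ℝ))^n * P n (j-1) +
        ∑ k ∈ Finset.Icc 2 n,
          (n.choose k : ℝ) * (1/(n:ℝ))^k * (1 - 1/(n:ℝ))^(n-k) * P k (j-1))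
    (hQ : ∀ j : ℕ, 1 ≤ j → Tendsto (fun n : ℕ => P n j) atTop (𝓝 (Q j)))
    (hR : ∀ k : ℕ, 2 ≤ k →
      Tendsto (fun j : ℕ => (2:ℝ)^j * P k j) atTop (𝓝 (R k)))
    (hρ : ρ = ∑' k : ℕ, Real.exp (-1) / (Nat.factorial (k+2)) * R (k+2)) :
    Tendsto (fun j : ℕ => (2:ℝ)^j * Q j) atTop
      (𝓝 (2 * ρ / (1 - 2 * Real.exp (-1)))) := by
  have hbound : ∀ j n, 1 ≤ j → 2 ≤ n → |P n j| ≤ 2 ^ n / 2 ^ j :=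
    fun j n hj hn => abs_le_two_pow_div_two_pow hP1 hP hj hn
  have hrec : ∀ j, 1 ≤ j → Q (j + 1) = Real.exp (-1) * Q j + poissonAvg P j := fun j hj =>
    eq_exp_neg_one_mul_add_poissonAvg_of_tendsto hP hj (C := (2 ^ j)⁻¹) (r := 2)
      (fun k hk => by rw [inv_mul_eq_div]; exact hbound j k hj hk)
      (hQ j hj) (hQ (j + 1) (by omega))
  have hforcing :
      Tendsto (fun j => 2 * (2 ^ (j + 1) * poissonAvg P (j + 1))) atTop (𝓝 (2 * ρ)) :=
    ((hρ ▸ tendsto_two_pow_mul_poissonAvg hbound hR).const_mul 2).comp (tendsto_add_atTop_nat 1)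
  have hstep : ∀ j, 2 ^ (j + 2) * Q (j + 2) =
      2 * Real.exp (-1) * (2 ^ (j + 1) * Q (j + 1)) + 2 * (2 ^ (j + 1) * poissonAvg P (j + 1)) :=
    fun j => by rw [hrec (j + 1) (by omega)]; ring
  exact (tendsto_add_atTop_iff_nat 1).1
    (tendsto_div_one_sub_of_eq_mul_add abs_two_mul_exp_neg_one_lt_one hstep hforcing)
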